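/- Let B be a symmetric positive definite d×d matrix and X a d×d matrix, and let p, q be positive integers. Writing D_s := B^{s/2} X B^{p+q−1−s/2} (Frobenius norms of such conjugated terms), one has the expansion ⟨Σ_{i=0}^{2q−1} B^i X B^{2q−1−i}, Σ_{j=0}^{2p−1} B^j X B^{2p−1−j}⟩ = Σ_{s=0}^{2p+2q−2} Q(2q−1, 2p−1, s) |B^{s/2} X B^{p+q−1−s/2}|², and consequently ⟨Σ_{i=0}^{2q−1} B^i X B^{2q−1−i}, Σ_{j=0}^{2p−1} B^j X B^{2p−1−j}⟩ ≤ |Σ_{i=0}^{p+q−1} B^i X B^{p+q−1−i}|². -/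

import Mathlib

open Matrix MeasureTheory

variable {d : ℕ}

/-- Spectral real matrix power of a hermitian matrix. -/
noncomputable def mpow {A : Matrix (Fin d) (Fin d) ℝ} (hA : A.IsHermitian) (t : ℝ) :
    Matrix (Fin d) (Fin d) ℝ :=
  (hA.eigenvectorUnitary : Matrix (Fin d) (Fin d) ℝ) *
    Matrix.diagonal (fun i => hA.eigenvalues i ^ t) *
    (star hA.eigenvectorUnitary : Matrix (Fin d) (Fin d) ℝ)

/-- Spectral matrix logarithm of a hermitian (positive definite) matrix. -/
noncomputable def mlog {A : Matrix (Fin d) (Fin d) ℝ} (hA : A.IsHermitian) :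
    Matrix (Fin d) (Fin d) ℝ :=
  (hA.eigenvectorUnitary : Matrix (Fin d) (Fin d) ℝ) *
    Matrix.diagonal (fun i => Real.log (hA.eigenvalues i)) *
    (star hA.eigenvectorUnitary : Matrix (Fin d) (Fin d) ℝ)

/-- Frobenius inner product. -/
def fip (X Y : Matrix (Fin d) (Fin d) ℝ) : ℝ := ∑ i, ∑ j, X i j * Y i j

/-- Frobenius norm. -/
noncomputable def fnorm (X : Matrix (Fin d) (Fin d) ℝ) : ℝ := Real.sqrt (fip X X)

/-- Entrywise integral over [0,1] of a matrix-valued function. -/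
noncomputable def mint (F : ℝ → Matrix (Fin d) (Fin d) ℝ) : Matrix (Fin d) (Fin d) ℝ :=
  Matrix.of fun i j => ∫ s in (0:ℝ)..1, F s i j

/-- Entrywise derivative of a matrix-valued function. -/
noncomputable def mderiv {m : ℕ} (F : ℝ → Matrix (Fin m) (Fin m) ℝ) (x : ℝ) :
    Matrix (Fin m) (Fin m) ℝ :=
  Matrix.of fun i j => deriv (fun y => F y i j) x

section Aux

variable {B : Matrix (Fin d) (Fin d) ℝ}

private lemma mpow_mul_mpow (hB : B.PosDef) (t u : ℝ) :
    mpow hB.1 t * mpow hB.1 u = mpow hB.1 (t + u) := by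
  have hd : (Matrix.diagonal fun i => hB.1.eigenvalues i ^ (t + u)) =
      (Matrix.diagonal fun i => hB.1.eigenvalues i ^ t) *
      (Matrix.diagonal fun i => hB.1.eigenvalues i ^ u) := by
    rw [Matrix.diagonal_mul_diagonal]
    exact congrArg Matrix.diagonal (funext fun i => Real.rpow_add (hB.eigenvalues_pos i) t u)
  have h1 : (star hB.1.eigenvectorUnitary : Matrix (Fin d) (Fin d) ℝ) *
      (hB.1.eigenvectorUnitary : Matrix (Fin d) (Fin d) ℝ) = 1 :=
    Matrix.UnitaryGroup.star_mul_self _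
  unfold mpow
  rw [hd]
  simp only [mul_assoc]
  rw [← mul_assoc (star hB.1.eigenvectorUnitary : Matrix (Fin d) (Fin d) ℝ), h1, one_mul]

private lemma mpow_natCast (hB : B.PosDef) (n : ℕ) : mpow hB.1 (n : ℝ) = B ^ n := by
  induction n with
  | zero =>
    unfold mpow
    simp only [Nat.cast_zero, Real.rpow_zero, Matrix.diagonal_one, mul_one, pow_zero]
    exact Matrix.mem_unitaryGroup_iff.mp (hB.1.eigenvectorUnitary).2
  | succ n ih =>
    have h1 : mpow hB.1 (1 : ℝ) = B := by
      unfold mpow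
      simp only [Real.rpow_one]
      have := hB.1.spectral_theorem
      rw [Unitary.conjStarAlgAut_apply] at this
      exact this.symm
    push_cast
    rw [← mpow_mul_mpow hB n 1, ih, h1, pow_succ]

private lemma mpow_transpose (hB : B.PosDef) (t : ℝ) : (mpow hB.1 t)ᵀ = mpow hB.1 t := by
  have h : (mpow hB.1 t).IsHermitian := by
    unfold mpow
    rw [show (star hB.1.eigenvectorUnitary : Matrix (Fin d) (Fin d) ℝ) =
        (hB.1.eigenvectorUnitary : Matrix (Fin d) (Fin d) ℝ)ᴴ from rfl]
    exact Matrix.isHermitian_mul_mul_conjTranspose _ (Matrix.isHermitian_diagonal _)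
  rw [← Matrix.conjTranspose_eq_transpose_of_trivial]
  exact h

private lemma fip_eq_trace (X Y : Matrix (Fin d) (Fin d) ℝ) :
    fip X Y = Matrix.trace (Xᵀ * Y) := by
  simp only [fip, Matrix.trace, Matrix.diag_apply, Matrix.mul_apply, Matrix.transpose_apply]
  rw [Finset.sum_comm]

private lemma fip_self_nonneg (X : Matrix (Fin d) (Fin d) ℝ) : 0 ≤ fip X X :=
  Finset.sum_nonneg fun _ _ => Finset.sum_nonneg fun _ _ => mul_self_nonneg _

private lemma fnorm_sq (X : Matrix (Fin d) (Fin d) ℝ) : fnorm X ^ 2 = fip X X :=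
  Real.sq_sqrt (fip_self_nonneg X)

private lemma fip_PXQ (X P₁ Q₁ P₂ Q₂ : Matrix (Fin d) (Fin d) ℝ)
    (hP : P₁ᵀ = P₁) (hQ : Q₁ᵀ = Q₁) :
    fip (P₁ * X * Q₁) (P₂ * X * Q₂) = Matrix.trace (Xᵀ * (P₁ * P₂) * X * (Q₂ * Q₁)) := by
  rw [fip_eq_trace]
  simp only [Matrix.transpose_mul, hP, hQ]
  rw [show Q₁ * (Xᵀ * P₁) * (P₂ * X * Q₂) = Q₁ * (Xᵀ * (P₁ * P₂) * X * Q₂) by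
    simp only [mul_assoc]]
  rw [Matrix.trace_mul_comm]
  congr 1
  simp only [mul_assoc]

private lemma fip_sum_left {ι : Type*} (r : Finset ι) (f : ι → Matrix (Fin d) (Fin d) ℝ)
    (Y : Matrix (Fin d) (Fin d) ℝ) :
    fip (∑ i ∈ r, f i) Y = ∑ i ∈ r, fip (f i) Y := by
  simp only [fip, Matrix.sum_apply, Finset.sum_mul]
  rw [Finset.sum_congr rfl fun i _ => Finset.sum_comm, Finset.sum_comm]

private lemma fip_sum_right {ι : Type*} (r : Finset ι) (f : ι → Matrix (Fin d) (Fin d) ℝ)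
    (Y : Matrix (Fin d) (Fin d) ℝ) :
    fip Y (∑ i ∈ r, f i) = ∑ i ∈ r, fip Y (f i) := by
  simp only [fip, Matrix.sum_apply, Finset.mul_sum]
  rw [Finset.sum_congr rfl fun i _ => Finset.sum_comm, Finset.sum_comm]

private lemma fip_sum_sum {ι κ : Type*} (r : Finset ι) (t : Finset κ)
    (f : ι → Matrix (Fin d) (Fin d) ℝ) (g : κ → Matrix (Fin d) (Fin d) ℝ) :
    fip (∑ i ∈ r, f i) (∑ j ∈ t, g j) = ∑ i ∈ r, ∑ j ∈ t, fip (f i) (g j) := by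
  rw [fip_sum_left]
  exact Finset.sum_congr rfl fun i _ => fip_sum_right t g (f i)

private lemma fip_conj (hB : B.PosDef) (X : Matrix (Fin d) (Fin d) ℝ) (a b c e : ℕ) :
    fip (B ^ a * X * B ^ b) (B ^ c * X * B ^ e) =
      fnorm (mpow hB.1 (((a : ℝ) + c) / 2) * X * mpow hB.1 (((b : ℝ) + e) / 2)) ^ 2 := by
  have hBt : Bᵀ = B := by
    rw [← Matrix.conjTranspose_eq_transpose_of_trivial]; exact hB.1
  have hPt : ∀ n : ℕ, (B ^ n)ᵀ = B ^ n := fun n => by rw [Matrix.transpose_pow, hBt]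
  have hP2 : mpow hB.1 (((a : ℝ) + c) / 2) * mpow hB.1 (((a : ℝ) + c) / 2) = B ^ (a + c) := by
    rw [mpow_mul_mpow hB, show ((a : ℝ) + c) / 2 + ((a : ℝ) + c) / 2 = ((a + c : ℕ) : ℝ) by
      push_cast; ring, mpow_natCast hB]
  have hQ2 : mpow hB.1 (((b : ℝ) + e) / 2) * mpow hB.1 (((b : ℝ) + e) / 2) = B ^ (b + e) := by
    rw [mpow_mul_mpow hB, show ((b : ℝ) + e) / 2 + ((b : ℝ) + e) / 2 = ((b + e : ℕ) : ℝ) by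
      push_cast; ring, mpow_natCast hB]
  rw [fnorm_sq, fip_PXQ X _ _ _ _ (hPt a) (hPt b),
    fip_PXQ X _ _ _ _ (mpow_transpose hB _) (mpow_transpose hB _), hP2, hQ2,
    ← pow_add, ← pow_add, Nat.add_comm e b]

private lemma fiber_card (a b s : ℕ) (ha : 1 ≤ a) (hb : 1 ≤ b) (hs : s ≤ a + b - 2) :
    ((Finset.range a ×ˢ Finset.range b).filter fun ij => ij.1 + ij.2 = s).card
      = min (a - 1) s + min (b - 1) s - s + 1 := by
  have himg : ((Finset.range a ×ˢ Finset.range b).filter fun ij => ij.1 + ij.2 = s)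
      = (Finset.Icc (s + 1 - b) (min (a - 1) s)).image (fun i => (i, s - i)) := by
    ext ⟨i, j⟩
    simp only [Finset.mem_filter, Finset.mem_product, Finset.mem_range, Finset.mem_image,
      Finset.mem_Icc, Prod.mk.injEq]
    constructor
    · rintro ⟨⟨hi, hj⟩, hsum⟩
      exact ⟨i, ⟨by omega, by omega⟩, rfl, by omega⟩
    · rintro ⟨x, ⟨h1, h2⟩, rfl, rfl⟩
      omega
  rw [himg, Finset.card_image_of_injective _ (fun x y h => (Prod.ext_iff.mp h).1),
    Nat.card_Icc]
  omega

private lemma sum_range_prod (a b : ℕ) (ha : 1 ≤ a) (hb : 1 ≤ b) (F : ℕ → ℝ) :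
    ∑ i ∈ Finset.range a, ∑ j ∈ Finset.range b, F (i + j)
      = ∑ s ∈ Finset.range (a + b - 1),
          ((min (a - 1) s + min (b - 1) s - s + 1 : ℕ) : ℝ) * F s := by
  rw [← Finset.sum_product']
  rw [← Finset.sum_fiberwise_of_maps_to (g := fun ij : ℕ × ℕ => ij.1 + ij.2)
      (t := Finset.range (a + b - 1)) (fun ij hij => by
        simp only [Finset.mem_product, Finset.mem_range] at hij ⊢; omega)]
  refine Finset.sum_congr rfl fun s hs => ?_
  have h1 : ∀ ij ∈ (Finset.range a ×ˢ Finset.range b).filter (fun ij => ij.1 + ij.2 = s),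
      F (ij.1 + ij.2) = F s := fun ij hij => by
    simp only [Finset.mem_filter] at hij
    rw [hij.2]
  rw [Finset.sum_congr rfl h1, Finset.sum_const, nsmul_eq_mul, fiber_card a b s ha hb (by
      simp only [Finset.mem_range] at hs; omega)]

end Aux

theorem stmt16 (B X : Matrix (Fin d) (Fin d) ℝ) (hB : B.PosDef) (p q : ℕ)
    (hp : 1 ≤ p) (hq : 1 ≤ q) :
    fip (∑ i ∈ Finset.range (2 * q), B ^ i * X * B ^ (2 * q - 1 - i))
        (∑ j ∈ Finset.range (2 * p), B ^ j * X * B ^ (2 * p - 1 - j)) =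
      ∑ s ∈ Finset.range (2 * p + 2 * q - 1),
        ((min (2 * q - 1) s + min (2 * p - 1) s - s + 1 : ℕ) : ℝ) *
          (fnorm (mpow hB.1 ((s : ℝ) / 2) * X *
            mpow hB.1 ((p : ℝ) + q - 1 - (s : ℝ) / 2))) ^ 2 ∧
    fip (∑ i ∈ Finset.range (2 * q), B ^ i * X * B ^ (2 * q - 1 - i))
        (∑ j ∈ Finset.range (2 * p), B ^ j * X * B ^ (2 * p - 1 - j)) ≤
      (fnorm (∑ i ∈ Finset.range (p + q), B ^ i * X * B ^ (p + q - 1 - i))) ^ 2 := by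
  have key : ∀ a b : ℕ, a + b = 2 * p + 2 * q → 1 ≤ a → 1 ≤ b →
      fip (∑ i ∈ Finset.range a, B ^ i * X * B ^ (a - 1 - i))
          (∑ j ∈ Finset.range b, B ^ j * X * B ^ (b - 1 - j))
        = ∑ s ∈ Finset.range (a + b - 1),
            ((min (a - 1) s + min (b - 1) s - s + 1 : ℕ) : ℝ) *
              (fnorm (mpow hB.1 ((s : ℝ) / 2) * X *
                mpow hB.1 ((p : ℝ) + q - 1 - (s : ℝ) / 2))) ^ 2 := by
    intro a b hab ha hb
    rw [fip_sum_sum]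
    refine (Finset.sum_congr rfl fun i hi => Finset.sum_congr rfl fun j hj => ?_).trans
      (sum_range_prod a b ha hb _)
    simp only [Finset.mem_range] at hi hj
    rw [fip_conj hB]
    have h1 : ((i : ℝ) + j) / 2 = ((i + j : ℕ) : ℝ) / 2 := by push_cast; ring
    have h2 : (((a - 1 - i : ℕ) : ℝ) + ((b - 1 - j : ℕ) : ℝ)) / 2
        = (p : ℝ) + q - 1 - ((i + j : ℕ) : ℝ) / 2 := by
      have hab' : (a : ℝ) + b = 2 * p + 2 * q := by exact_mod_cast congrArg Nat.cast hab
      rw [Nat.cast_sub (by omega), Nat.cast_sub (by omega), Nat.cast_sub (by omega),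
        Nat.cast_sub (by omega)]
      push_cast
      push_cast at hab'
      linarith
    rw [h1, h2]
  constructor
  · rw [key (2 * q) (2 * p) (by ring) (by omega) (by omega),
      show 2 * q + 2 * p - 1 = 2 * p + 2 * q - 1 by omega]
  · rw [key (2 * q) (2 * p) (by ring) (by omega) (by omega), fnorm_sq,
      key (p + q) (p + q) (by ring) (by omega) (by omega),
      show 2 * q + 2 * p - 1 = 2 * p + 2 * q - 1 by omega,
      show p + q + (p + q) - 1 = 2 * p + 2 * q - 1 by omega]
    refine Finset.sum_le_sum fun s hs => ?_
    simp only [Finset.mem_range] at hs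
    refine mul_le_mul_of_nonneg_right ?_ (sq_nonneg _)
    exact Nat.cast_le.mpr (by omega)
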